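/- The graphs K₄ ∪ P₄ and K₂ ∪ K₂ ∪ P₄ are locally equienergetic: e(K₄ ∪ P₄) = e(K₂ ∪ K₂ ∪ P₄). -/

import Mathlib

open SimpleGraph Matrix Finset

noncomputable section

/-- The adjacency matrix of a simple graph over `ℝ` is Hermitian. -/
lemma adjMatrix_isHermitian {V : Type*} [Fintype V] (G : SimpleGraph V)
    [DecidableRel G.Adj] : (G.adjMatrix ℝ).IsHermitian := by
  rw [Matrix.IsHermitian, Matrix.conjTranspose_eq_transpose_of_trivial]
  exact G.isSymm_adjMatrix

/-- The energy of a finite simple graph: the sum of the absolute values of the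
eigenvalues of its adjacency matrix. -/
def graphEnergy {V : Type*} [Fintype V] [DecidableEq V] (G : SimpleGraph V) : ℝ :=
  letI := Classical.decRel G.Adj
  ∑ i, |(adjMatrix_isHermitian G).eigenvalues i|

/-- The local energy of `G` at a vertex `v`: the energy of `G` minus the energy of the
induced subgraph obtained by deleting `v`. -/
def localEnergyAt {V : Type*} [Fintype V] [DecidableEq V] (G : SimpleGraph V) (v : V) : ℝ :=
  graphEnergy G - graphEnergy (G.induce {u | u ≠ v})

/-- The local energy of `G`: the sum of the local energies at all vertices. -/
def localEnergy {V : Type*} [Fintype V] [DecidableEq V] (G : SimpleGraph V) : ℝ :=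
  ∑ v, localEnergyAt G v

end

/-!
Local energy is additive over disjoint unions: deleting a vertex of one component leaves the
energy of the other component unchanged, so `E_{G ∪ H}(v) = E_G(v)` for `v ∈ G`. Hence the
`P₄` contributions cancel and it suffices to compare `e(K₄)` with `2 e(K₂)`. The spectrum of
`K_{n+1}` is `n` together with `-1` of multiplicity `n`, so `E(K_{n+1}) = 2n`, every vertex of
`K_m` (`m ≥ 2`) has local energy `2`, and `e(K₄) = 8 = 2 e(K₂)`.
-/

open Polynomial

lemma graphEnergy_eq_sum_abs_roots {V : Type*} [Fintype V] [DecidableEq V] (G : SimpleGraph V)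
    [DecidableRel G.Adj] :
    graphEnergy G = ((G.adjMatrix ℝ).charpoly.roots.map (|·|)).sum := by
  -- `graphEnergy` is defined with the classical instance; all instances agree.
  obtain rfl : ‹DecidableRel G.Adj› = Classical.decRel G.Adj := Subsingleton.elim _ _
  let _ := Classical.decRel G.Adj
  rw [(adjMatrix_isHermitian G).roots_charpoly_eq_eigenvalues, Multiset.map_map]
  rfl

lemma charpoly_adjMatrix_top {R V : Type*} [CommRing R] [Fintype V] [DecidableEq V] {n : ℕ}
    (h : Fintype.card V = n + 1) :
    ((⊤ : SimpleGraph V).adjMatrix R).charpoly = (X - C (n : R)) * (X - C (-1)) ^ n := by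
  have hJ : (of 1 : Matrix V V R) = vecMulVec 1 1 := by ext; simp [vecMulVec_apply]
  have hI : (1 : Matrix V V R) = scalar V 1 := (map_one _).symm
  rw [adjMatrix_completeGraph_eq_of_one_sub_one, hJ, hI, charpoly_sub_scalar, charpoly_vecMulVec,
    one_dotProduct_one, h, add_tsub_cancel_right]
  simp only [smul_eq_C_mul, map_neg, map_one, sub_neg_eq_add, map_natCast, sub_comp, mul_comp,
    pow_comp, X_comp, natCast_comp]
  push_cast
  ring

lemma graphEnergy_top {V : Type*} [Fintype V] [DecidableEq V] {n : ℕ}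
    (h : Fintype.card V = n + 1) : graphEnergy (⊤ : SimpleGraph V) = 2 * n := by
  rw [graphEnergy_eq_sum_abs_roots, charpoly_adjMatrix_top h, roots_mul, roots_pow,
    roots_X_sub_C, roots_X_sub_C]
  · simp [Multiset.map_nsmul, Multiset.sum_nsmul, two_mul]
  · exact ((monic_X_sub_C _).mul ((monic_X_sub_C _).pow n)).ne_zero

lemma SimpleGraph.Iso.graphEnergy_eq {V W : Type*} [Fintype V] [DecidableEq V] [Fintype W]
    [DecidableEq W] {G : SimpleGraph V} {H : SimpleGraph W} (e : G ≃g H) :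
    graphEnergy G = graphEnergy H := by
  classical
  rw [graphEnergy_eq_sum_abs_roots, graphEnergy_eq_sum_abs_roots, ← e.reindex_adjMatrix ℝ,
    charpoly_reindex]

section Sum

variable {α β : Type*} (G : SimpleGraph α) (H : SimpleGraph β)

lemma adjMatrix_sum (R : Type*) [Zero R] [One R] [DecidableRel G.Adj] [DecidableRel H.Adj]
    [DecidableRel (G ⊕g H).Adj] :
    (G ⊕g H).adjMatrix R = fromBlocks (G.adjMatrix R) 0 0 (H.adjMatrix R) := by
  ext (i | i) (j | j) <;> simp

def induceSumInlIso (v : α) :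
    (G ⊕g H).induce {u | u ≠ .inl v} ≃g G.induce {a | a ≠ v} ⊕g H where
  toEquiv := Equiv.subtypeSum.trans <|
    Equiv.sumCongr (Equiv.subtypeEquivRight fun _ ↦ by simp) (Equiv.subtypeUnivEquiv (by simp))
  map_rel_iff' := by rintro ⟨a | b, _⟩ ⟨c | d, _⟩ <;> exact Iff.rfl

def induceSumInrIso (w : β) :
    (G ⊕g H).induce {u | u ≠ .inr w} ≃g G ⊕g H.induce {b | b ≠ w} where
  toEquiv := Equiv.subtypeSum.trans <|
    Equiv.sumCongr (Equiv.subtypeUnivEquiv (by simp)) (Equiv.subtypeEquivRight fun _ ↦ by simp)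
  map_rel_iff' := by rintro ⟨a | b, _⟩ ⟨c | d, _⟩ <;> exact Iff.rfl

variable [Fintype α] [DecidableEq α] [Fintype β] [DecidableEq β]

lemma graphEnergy_sum : graphEnergy (G ⊕g H) = graphEnergy G + graphEnergy H := by
  classical
  rw [graphEnergy_eq_sum_abs_roots, graphEnergy_eq_sum_abs_roots, graphEnergy_eq_sum_abs_roots,
    adjMatrix_sum, charpoly_fromBlocks_zero₁₂,
    roots_mul ((charpoly_monic _).mul (charpoly_monic _)).ne_zero, Multiset.map_add,
    Multiset.sum_add]

lemma localEnergyAt_sum_inl (v : α) : localEnergyAt (G ⊕g H) (.inl v) = localEnergyAt G v := by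
  rw [localEnergyAt, localEnergyAt, (induceSumInlIso G H v).graphEnergy_eq, graphEnergy_sum,
    graphEnergy_sum]
  ring

lemma localEnergyAt_sum_inr (w : β) : localEnergyAt (G ⊕g H) (.inr w) = localEnergyAt H w := by
  rw [localEnergyAt, localEnergyAt, (induceSumInrIso G H w).graphEnergy_eq, graphEnergy_sum,
    graphEnergy_sum]
  ring

lemma localEnergy_sum : localEnergy (G ⊕g H) = localEnergy G + localEnergy H := by
  simp only [localEnergy, Fintype.sum_sum_type, localEnergyAt_sum_inl, localEnergyAt_sum_inr]

end Sum

lemma localEnergyAt_top {V : Type*} [Fintype V] [DecidableEq V] {n : ℕ}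
    (h : Fintype.card V = n + 2) (v : V) : localEnergyAt (⊤ : SimpleGraph V) v = 2 := by
  have hcard : Fintype.card {u | u ≠ v} = n + 1 := by simp [Finset.filter_ne', h]
  rw [localEnergyAt, ← completeGraph_eq_top, induce_top, completeGraph_eq_top, graphEnergy_top h,
    graphEnergy_top hcard]
  push_cast
  ring

lemma localEnergy_top {V : Type*} [Fintype V] [DecidableEq V] {n : ℕ}
    (h : Fintype.card V = n + 2) : localEnergy (⊤ : SimpleGraph V) = 2 * (n + 2) := by
  simp [localEnergy, localEnergyAt_top h, h, mul_comm]

/-- `e(K₄ ∪ P₄) = e(K₂ ∪ K₂ ∪ P₄)`. -/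
theorem localEnergy_K4_P4 :
    localEnergy ((⊤ : SimpleGraph (Fin 4)) ⊕g pathGraph 4) =
      localEnergy (((⊤ : SimpleGraph (Fin 2)) ⊕g (⊤ : SimpleGraph (Fin 2)))
        ⊕g pathGraph 4) := by
  simp only [localEnergy_sum, localEnergy_top (n := 2) (Fintype.card_fin 4),
    localEnergy_top (n := 0) (Fintype.card_fin 2)]
  norm_num
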